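/- Theorem 2, product state case: If ρ = ρ_A ⊗ ρ_B is a product state, U = U_A ⊗ U_B, and X = X_A ⊗ X_B, then H_AFL(ρ, U, X, t) = H_AFL(ρ_A, U_A, X_A, t) + H_AFL(ρ_B, U_B, X_B, t) for all t. -/

import Mathlib

open scoped BigOperators ComplexOrder
open Matrix Kronecker

namespace AFL

variable {n : Type*} [Fintype n] [DecidableEq n]

/-- von Neumann entropy of a (Hermitian) matrix, via its eigenvalues. -/
noncomputable def vNEntropy (ρ : Matrix n n ℂ) : ℝ :=
  if h : ρ.IsHermitian then -∑ i, h.eigenvalues i * Real.log (h.eigenvalues i) else 0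

/-- A density matrix: positive semidefinite (hence Hermitian) with unit trace. -/
def IsDensity (ρ : Matrix n n ℂ) : Prop := ρ.PosSemidef ∧ ρ.trace = 1

/-- An operational partition of unity (Kraus operators of a channel). -/
def IsPartition {K : Type*} [Fintype K] (X : K → Matrix n n ℂ) : Prop :=
  ∑ i, (X i)ᴴ * X i = 1

/-- The entropy-exchange (environment) state ρ̃[X]_{ij} = Tr(Xⁱ ρ Xʲ†). -/
noncomputable def envState {K : Type*} [Fintype K] (X : K → Matrix n n ℂ)
    (ρ : Matrix n n ℂ) : Matrix K K ℂ :=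
  Matrix.of fun i j => (X i * ρ * (X j)ᴴ).trace

/-- Multitime Kraus operator U X^{i_t} ⋯ U X^{i_1} of the t-step evolved partition (UX)^t. -/
noncomputable def multiKraus {K : Type*} (U : Matrix n n ℂ) (X : K → Matrix n n ℂ)
    (t : ℕ) (idx : Fin t → K) : Matrix n n ℂ :=
  (List.ofFn fun k => U * X (idx k)).prod

/-- Cumulative AFL entropy: von Neumann entropy of the environment state after t steps. -/
noncomputable def HAFL {K : Type*} [Fintype K] [DecidableEq K]
    (ρ U : Matrix n n ℂ) (X : K → Matrix n n ℂ) (t : ℕ) : ℝ :=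
  vNEntropy (envState (multiKraus U X t) ρ)

/-- Shannon entropy of a probability vector. -/
noncomputable def shannon {ι : Type*} [Fintype ι] (p : ι → ℝ) : ℝ :=
  -∑ i, p i * Real.log (p i)

end AFL

/-!
The multitime Kraus operators of the product dynamics are Kronecker products of those of the
factors, so after reindexing `Fin t → KA × KB ≃ (Fin t → KA) × (Fin t → KB)` the environment
state of `ρA ⊗ₖ ρB` is the Kronecker product of the two environment states. Both are Hermitian
with unit trace; the eigenvalues of a Kronecker product of Hermitian matrices are the pairwise
products of eigenvalues (compare characteristic polynomials after a simultaneous unitary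
diagonalisation), and Shannon entropy is additive on product distributions because
`negMulLog (x * y) = y * negMulLog x + x * negMulLog y` for all real `x, y`.
-/

open Polynomial

namespace Matrix.IsHermitian

variable {𝕜 n m ι : Type*} [RCLike 𝕜]

theorem kronecker {A : Matrix n n 𝕜} {B : Matrix m m 𝕜} (hA : A.IsHermitian)
    (hB : B.IsHermitian) : (A ⊗ₖ B).IsHermitian := by
  rw [IsHermitian, conjTranspose_kronecker, hA.eq, hB.eq]

variable [Fintype n] [DecidableEq n] [Fintype m] [DecidableEq m] [Fintype ι]

theorem sum_comp_eigenvalues_of_charpoly_eq {A : Matrix n n 𝕜} (hA : A.IsHermitian) {c : ι → ℝ}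
    (h : A.charpoly = ∏ i, (X - C (c i : 𝕜))) (f : ℝ → ℝ) :
    ∑ i, f (hA.eigenvalues i) = ∑ i, f (c i) := by
  have hroots : Finset.univ.val.map hA.eigenvalues = Finset.univ.val.map c := by
    have := hA.roots_charpoly_eq_eigenvalues
    rw [h, Polynomial.roots_prod _ _ (Finset.prod_ne_zero_iff.2 fun i _ => X_sub_C_ne_zero _)]
      at this
    simp only [roots_X_sub_C, Multiset.bind_singleton] at this
    refine Multiset.map_injective (RCLike.ofReal_injective (K := 𝕜)) ?_
    rw [Multiset.map_map, Multiset.map_map]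
    exact this.symm
  simpa [Multiset.map_map] using congrArg (fun s => (s.map f).sum) hroots

theorem sum_eigenvalues_eq_one {A : Matrix n n 𝕜} (hA : A.IsHermitian) (h : A.trace = 1) :
    ∑ i, hA.eigenvalues i = 1 := by
  simpa using congrArg RCLike.re (hA.trace_eq_sum_eigenvalues.symm.trans h)

theorem charpoly_kronecker {A : Matrix n n 𝕜} {B : Matrix m m 𝕜} (hA : A.IsHermitian)
    (hB : B.IsHermitian) :
    (A ⊗ₖ B).charpoly =
      ∏ p : n × m, (X - C ((hA.eigenvalues p.1 * hB.eigenvalues p.2 : ℝ) : 𝕜)) := by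
  have hU := Unitary.star_mul_self_of_mem hA.eigenvectorUnitary.2
  have hV := Unitary.star_mul_self_of_mem hB.eigenvectorUnitary.2
  conv_lhs => rw [hA.spectral_theorem, hB.spectral_theorem, Unitary.conjStarAlgAut_apply,
    Unitary.conjStarAlgAut_apply, mul_kronecker_mul, mul_kronecker_mul, charpoly_mul_comm,
    ← mul_assoc, ← mul_kronecker_mul, hU, hV, one_kronecker_one, one_mul,
    diagonal_kronecker_diagonal, charpoly_diagonal]
  simp

end Matrix.IsHermitian

namespace AFL

section Entropy

variable {n m ι : Type*} [Fintype n] [DecidableEq n] [Fintype m] [DecidableEq m] [Fintype ι]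

theorem shannon_eq_sum_negMulLog (p : ι → ℝ) : shannon p = ∑ i, Real.negMulLog (p i) := by
  simp [shannon, Real.negMulLog, Finset.sum_neg_distrib]

theorem shannon_mul {κ : Type*} [Fintype κ] {p : ι → ℝ} {q : κ → ℝ} (hp : ∑ i, p i = 1)
    (hq : ∑ j, q j = 1) : shannon (fun ij : ι × κ => p ij.1 * q ij.2) = shannon p + shannon q := by
  simp only [shannon_eq_sum_negMulLog, Real.negMulLog_mul, Fintype.sum_prod_type,
    Finset.sum_add_distrib, ← Finset.sum_mul, ← Finset.mul_sum, hp, hq, one_mul]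

theorem vNEntropy_eq_shannon_of_charpoly_eq {A : Matrix n n ℂ} (hA : A.IsHermitian) {c : ι → ℝ}
    (h : A.charpoly = ∏ i, (X - C (c i : ℂ))) :
    vNEntropy A = shannon c := by
  rw [vNEntropy, dif_pos hA, shannon_eq_sum_negMulLog, ← hA.sum_comp_eigenvalues_of_charpoly_eq h]
  simp [Real.negMulLog, Finset.sum_neg_distrib]

theorem vNEntropy_submatrix_equiv (A : Matrix n n ℂ) (e : m ≃ n) :
    vNEntropy (A.submatrix e e) = vNEntropy A := by
  by_cases hA : A.IsHermitian
  · rw [vNEntropy_eq_shannon_of_charpoly_eq (hA.submatrix e) (c := hA.eigenvalues)]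
    · rw [vNEntropy, dif_pos hA, shannon]
    · exact (charpoly_reindex e.symm A).trans hA.charpoly_eq
  · have hA' : ¬ (A.submatrix e e).IsHermitian := fun h => hA (by
      simpa using h.submatrix e.symm)
    rw [vNEntropy, vNEntropy, dif_neg hA, dif_neg hA']

theorem vNEntropy_kronecker {A : Matrix n n ℂ} {B : Matrix m m ℂ} (hA : A.IsHermitian)
    (hB : B.IsHermitian) (hA1 : A.trace = 1) (hB1 : B.trace = 1) :
    vNEntropy (A ⊗ₖ B) = vNEntropy A + vNEntropy B := by
  have hAB : (A ⊗ₖ B).charpoly =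
      ∏ p : n × m, (X - C ((hA.eigenvalues p.1 * hB.eigenvalues p.2 : ℝ) : ℂ)) :=
    hA.charpoly_kronecker hB
  rw [vNEntropy_eq_shannon_of_charpoly_eq (hA.kronecker hB) hAB,
    shannon_mul (hA.sum_eigenvalues_eq_one hA1) (hB.sum_eigenvalues_eq_one hB1),
    vNEntropy, vNEntropy, dif_pos hA, dif_pos hB, shannon, shannon]

end Entropy

section Dynamics

variable {n : Type*} [Fintype n] {K L : Type*}

theorem isHermitian_envState [Fintype K] (X : K → Matrix n n ℂ) {ρ : Matrix n n ℂ}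
    (hρ : ρ.IsHermitian) : (envState X ρ).IsHermitian := by
  ext i j
  simp only [conjTranspose_apply, envState, of_apply, ← trace_conjTranspose,
    conjTranspose_mul, conjTranspose_conjTranspose, hρ.eq, mul_assoc]

variable [DecidableEq n]

theorem multiKraus_succ (U : Matrix n n ℂ) (X : K → Matrix n n ℂ) (t : ℕ) :
    multiKraus U X (t + 1) =
      (fun p : K × (Fin t → K) => U * X p.1 * multiKraus U X t p.2) ∘
        (Fin.consEquiv fun _ => K).symm := by
  ext1 idx
  simp [multiKraus, List.ofFn_succ, Fin.consEquiv, Fin.tail]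

variable [Fintype K] [Fintype L]

theorem IsPartition.comp_equiv {X : K → Matrix n n ℂ} (hX : IsPartition X) (e : L ≃ K) :
    IsPartition (X ∘ e) :=
  (e.sum_comp fun k => (X k)ᴴ * X k).trans hX

theorem IsPartition.unitary_mul {U : Matrix n n ℂ} (hU : U ∈ unitaryGroup n ℂ)
    {X : K → Matrix n n ℂ} (hX : IsPartition X) : IsPartition fun k => U * X k := by
  have hUU : Uᴴ * U = 1 := Unitary.star_mul_self_of_mem hU
  simpa only [IsPartition, conjTranspose_mul, mul_assoc, ← mul_assoc Uᴴ, hUU, one_mul] using hX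

theorem IsPartition.mul {X : K → Matrix n n ℂ} {Y : L → Matrix n n ℂ} (hX : IsPartition X)
    (hY : IsPartition Y) : IsPartition fun p : K × L => X p.1 * Y p.2 := by
  have hXY (l : L) : ∑ k, (X k * Y l)ᴴ * (X k * Y l) = (Y l)ᴴ * Y l := by
    simp only [conjTranspose_mul, ← mul_assoc, ← Finset.sum_mul]
    simp only [mul_assoc, ← Finset.mul_sum]
    rw [hX, one_mul]
  rw [IsPartition, Fintype.sum_prod_type_right]
  exact (Finset.sum_congr rfl fun l _ => hXY l).trans hY

theorem isPartition_multiKraus {U : Matrix n n ℂ} (hU : U ∈ unitaryGroup n ℂ)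
    {X : K → Matrix n n ℂ} (hX : IsPartition X) : ∀ t, IsPartition (multiKraus U X t)
  | 0 => by simp [IsPartition, multiKraus]
  | t + 1 => by
    rw [multiKraus_succ]
    exact ((hX.unitary_mul hU).mul (isPartition_multiKraus hU hX t)).comp_equiv _

theorem trace_envState {X : K → Matrix n n ℂ} (hX : IsPartition X) (ρ : Matrix n n ℂ) :
    (envState X ρ).trace = ρ.trace := by
  calc (envState X ρ).trace = ∑ k, ((X k)ᴴ * X k * ρ).trace :=
        Finset.sum_congr rfl fun k _ => trace_mul_cycle _ _ _
    _ = ρ.trace := by rw [← trace_sum, ← Finset.sum_mul, hX, one_mul]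

end Dynamics

section Product

variable {n nA nB : Type*} [Fintype n] [Fintype nA] [Fintype nB] {K L KA KB : Type*}

theorem envState_comp [Fintype K] [Fintype L] (X : K → Matrix n n ℂ) (e : L → K)
    (ρ : Matrix n n ℂ) : envState (X ∘ e) ρ = (envState X ρ).submatrix e e :=
  rfl

theorem envState_kronecker [Fintype KA] [Fintype KB] (XA : KA → Matrix nA nA ℂ)
    (XB : KB → Matrix nB nB ℂ) (ρA : Matrix nA nA ℂ) (ρB : Matrix nB nB ℂ) :
    envState (fun p : KA × KB => XA p.1 ⊗ₖ XB p.2) (ρA ⊗ₖ ρB) =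
      envState XA ρA ⊗ₖ envState XB ρB := by
  ext ⟨i, j⟩ ⟨k, l⟩
  simp [envState, conjTranspose_kronecker, ← mul_kronecker_mul, trace_kronecker]

variable [DecidableEq nA] [DecidableEq nB]

theorem multiKraus_kronecker (UA : Matrix nA nA ℂ) (UB : Matrix nB nB ℂ)
    (XA : KA → Matrix nA nA ℂ) (XB : KB → Matrix nB nB ℂ) (t : ℕ) :
    multiKraus (UA ⊗ₖ UB) (fun p : KA × KB => XA p.1 ⊗ₖ XB p.2) t =
      (fun q => multiKraus UA XA t q.1 ⊗ₖ multiKraus UB XB t q.2) ∘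
        Equiv.arrowProdEquivProdArrow (Fin t) (fun _ => KA) (fun _ => KB) := by
  induction t with
  | zero => ext1; simp [multiKraus]
  | succ t ih =>
    ext1 idx
    have := congrFun ih (Fin.tail idx)
    simp_all [multiKraus, List.ofFn_succ, mul_kronecker_mul, Fin.tail]

end Product

end AFL

/-- Theorem 2, product-state case: for a product state ρ_A ⊗ ρ_B,
product dynamics and product partition, the cumulative AFL entropy is additive. -/
theorem stmt13 {nA nB : Type*} [Fintype nA] [DecidableEq nA] [Fintype nB] [DecidableEq nB]
    {KA KB : Type*} [Fintype KA] [DecidableEq KA] [Fintype KB] [DecidableEq KB]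
    (ρA : Matrix nA nA ℂ) (ρB : Matrix nB nB ℂ)
    (hρA : AFL.IsDensity ρA) (hρB : AFL.IsDensity ρB)
    (UA : Matrix nA nA ℂ) (UB : Matrix nB nB ℂ)
    (hUA : UA ∈ Matrix.unitaryGroup nA ℂ) (hUB : UB ∈ Matrix.unitaryGroup nB ℂ)
    (XA : KA → Matrix nA nA ℂ) (XB : KB → Matrix nB nB ℂ)
    (hXA : AFL.IsPartition XA) (hXB : AFL.IsPartition XB)
    (t : ℕ) :
    AFL.HAFL (ρA ⊗ₖ ρB) (UA ⊗ₖ UB) (fun ij : KA × KB => XA ij.1 ⊗ₖ XB ij.2) t =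
      AFL.HAFL ρA UA XA t + AFL.HAFL ρB UB XB t := by
  open AFL in
  unfold HAFL
  rw [multiKraus_kronecker, envState_comp, vNEntropy_submatrix_equiv, envState_kronecker,
    vNEntropy_kronecker (isHermitian_envState _ hρA.1.1) (isHermitian_envState _ hρB.1.1)
      ((trace_envState (isPartition_multiKraus hUA hXA t) ρA).trans hρA.2)
      ((trace_envState (isPartition_multiKraus hUB hXB t) ρB).trans hρB.2)]
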